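/- arXiv:1611.00233 — 2 statements merged into one kernel-verified Lean document; each statement's English description precedes it below -/
import Mathlib

section
/- The measure ν_{κ,∞} = |κ|δ₁ + (1/2π)√(1 - κ²/sin²(θ/2)) 𝟙{|sin(θ/2)| ≥ |κ|} dθ on the unit circle is a probability measure, i.e., (1/2π)∫_{{θ ∈ [-π,π] : |sin(θ/2)| ≥ |κ|}} √(1 - κ²/sin²(θ/2)) dθ = 1 - |κ|. -/
/-!
For `a = |κ| ∈ [0, 1)` and `|θ| ≤ π` we have `|sin (θ / 2)| = sin (|θ| / 2)`, so the domain of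
integration is `{θ : 2 arcsin a ≤ |θ| ≤ π}`. The integrand is even, so the integral is twice the
integral over `[2 arcsin a, π]`. There
`-2 arcsin (cos (θ / 2) / √(1 - a²)) + 2 a arcsin (a cot (θ / 2) / √(1 - a²))` is a primitive; it
vanishes at `π` and equals `-π (1 - a)` at `2 arcsin a`, so each half contributes `π (1 - a)`.
-/

open Real MeasureTheory Set

lemma sqrt_one_sub_div_sq (x : ℝ) {y : ℝ} (hy : 0 < y) :
    √(1 - (x / y) ^ 2) = √(y ^ 2 - x ^ 2) / y := by
  rw [← sqrt_sq hy.le, ← sqrt_div' _ (sq_nonneg _), sqrt_sq hy.le]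
  congr 1
  field_simp

lemma hasDerivAt_arcsin_div {x y : ℝ} (hy : 0 < y) (h : x ^ 2 < y ^ 2) :
    HasDerivAt arcsin (y / √(y ^ 2 - x ^ 2)) (x / y) := by
  have hlt : (x / y) ^ 2 < 1 := by rwa [div_pow, div_lt_one (by positivity)]
  have := hasDerivAt_arcsin (x := x / y) (by rintro h; norm_num [h] at hlt)
    (by rintro h; norm_num [h] at hlt)
  rwa [sqrt_one_sub_div_sq x hy, one_div_div] at this

lemma setIntegral_Icc_neg_of_even {E : Type*} [NormedAddCommGroup E] [NormedSpace ℝ E]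
    {f : ℝ → E} (hf : ∀ x, f (-x) = f x) {a b : ℝ} (hab : a ≤ b) :
    ∫ x in Icc (-b) (-a), f x = ∫ x in Icc a b, f x := by
  rw [integral_Icc_eq_integral_Ioc, integral_Icc_eq_integral_Ioc,
    ← intervalIntegral.integral_of_le (neg_le_neg hab), ← intervalIntegral.integral_of_le hab,
    ← intervalIntegral.integral_comp_neg]
  simp_rw [hf]

lemma aedisjoint_Icc_neg_Icc {c : ℝ} (hc : 0 ≤ c) (a b : ℝ) :
    AEDisjoint volume (Icc a (-c)) (Icc c b) :=
  measure_mono_null (fun x hx => le_antisymm (by linarith [hx.1.2]) (by linarith [hx.2.1]))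
    (measure_singleton 0)

lemma setOf_le_abs_sin_half_eq_union {a : ℝ} (ha : a ∈ Icc (-1 : ℝ) 1) :
    {θ : ℝ | θ ∈ Icc (-π) π ∧ a ≤ |sin (θ / 2)|}
      = Icc (-π) (-(2 * arcsin a)) ∪ Icc (2 * arcsin a) π := by
  have harcsin_ge := neg_pi_div_two_le_arcsin a
  have harcsin_le := arcsin_le_pi_div_two a
  ext θ
  simp only [mem_ofPred_eq, mem_union, mem_Icc]
  by_cases hθ : θ ∈ Icc (-π) π
  · have hθ' : |θ| ≤ π := abs_le.2 hθ
    have hle_iff : a ≤ |sin (θ / 2)| ↔ 2 * arcsin a ≤ |θ| := by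
      rw [abs_sin_eq_sin_abs_of_abs_le_pi (by rw [abs_div]; linarith [pi_pos]), abs_div, abs_two,
        ← arcsin_le_iff_le_sin ha ⟨by linarith [abs_nonneg θ], by linarith⟩]
      constructor <;> intro h <;> linarith
    rw [hle_iff, le_abs']
    grind
  · grind

lemma integrableOn_sqrt_one_sub_div_sin_sq (a : ℝ) {s : Set ℝ} (hs : volume s ≠ ⊤) :
    IntegrableOn (fun θ => √(1 - a ^ 2 / sin (θ / 2) ^ 2)) s := by
  refine Measure.integrableOn_of_bounded (M := 1) hs (Measurable.aestronglyMeasurable (by fun_prop))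
    (ae_of_all _ fun θ => ?_)
  rw [Real.norm_of_nonneg (sqrt_nonneg _)]
  exact sqrt_le_one.2 (sub_le_self _ (by positivity))

noncomputable def nuPrimitive (a θ : ℝ) : ℝ :=
  -2 * arcsin (cos (θ / 2) / √(1 - a ^ 2))
    + 2 * a * arcsin (a * cos (θ / 2) / (√(1 - a ^ 2) * sin (θ / 2)))

lemma hasDerivAt_nuPrimitive {a θ : ℝ} (h : |a| < sin (θ / 2)) :
    HasDerivAt (nuPrimitive a) √(1 - a ^ 2 / sin (θ / 2) ^ 2) θ := by
  have hsin : HasDerivAt (fun θ => sin (θ / 2)) (cos (θ / 2) / 2) θ := by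
    simpa [div_eq_mul_inv] using ((hasDerivAt_id θ).div_const 2).sin
  have hcos : HasDerivAt (fun θ => cos (θ / 2)) (-sin (θ / 2) / 2) θ := by
    simpa [div_eq_mul_inv, neg_div] using ((hasDerivAt_id θ).div_const 2).cos
  set s := sin (θ / 2)
  set o := cos (θ / 2)
  have hs : 0 < s := (abs_nonneg a).trans_lt h
  have has : a ^ 2 < s ^ 2 := sq_lt_sq.2 (by rwa [abs_of_pos hs])
  have hso : s ^ 2 + o ^ 2 = 1 := sin_sq_add_cos_sq (θ / 2)
  set b := √(1 - a ^ 2)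
  have hb : 0 < b := sqrt_pos.2 (by nlinarith)
  have hb2 : b ^ 2 = 1 - a ^ 2 := sq_sqrt (by nlinarith)
  have h1 : b ^ 2 - o ^ 2 = s ^ 2 - a ^ 2 := by linear_combination hb2 - hso
  have h2 : (b * s) ^ 2 - (a * o) ^ 2 = s ^ 2 - a ^ 2 := by
    linear_combination s ^ 2 * hb2 - a ^ 2 * hso
  have hterm1 := (hasDerivAt_arcsin_div hb (by linarith)).comp θ (hcos.div_const b)
  have hterm2 := (hasDerivAt_arcsin_div (mul_pos hb hs) (by linarith)).comp θ
    ((hcos.const_mul a).div (hsin.const_mul b) (by positivity))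
  -- all three square roots reduce to `√(s ^ 2 - a ^ 2)`
  rw [h1] at hterm1
  rw [h2] at hterm2
  refine ((hterm1.const_mul (-2)).add (hterm2.const_mul (2 * a))).congr_deriv ?_
  have hD : 0 < √(s ^ 2 - a ^ 2) := sqrt_pos.2 (by linarith)
  have hD2 : √(s ^ 2 - a ^ 2) ^ 2 = s ^ 2 - a ^ 2 := sq_sqrt (by linarith)
  rw [show sin (θ / 2) = s from rfl, show cos (θ / 2) = o from rfl, ← div_pow,
    sqrt_one_sub_div_sq a hs]
  field_simp
  linear_combination -hD2 - a ^ 2 * hso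

lemma continuousOn_nuPrimitive {a : ℝ} {s : Set ℝ} (hs : ∀ θ ∈ s, sin (θ / 2) ≠ 0)
    (ha : a ^ 2 < 1) :
    ContinuousOn (nuPrimitive a) s := by
  have hb : √(1 - a ^ 2) ≠ 0 := (sqrt_pos.2 (by linarith)).ne'
  refine (continuous_const.mul (continuous_arcsin.comp (by fun_prop))).continuousOn.add ?_
  exact continuousOn_const.mul (continuous_arcsin.comp_continuousOn
    (ContinuousOn.div (by fun_prop) (by fun_prop) fun θ hθ => mul_ne_zero hb (hs θ hθ)))

lemma nuPrimitive_pi (a : ℝ) : nuPrimitive a π = 0 := by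
  simp [nuPrimitive]

lemma nuPrimitive_two_mul_arcsin {a : ℝ} (ha0 : 0 < a) (ha1 : a < 1) :
    nuPrimitive a (2 * arcsin a) = π * (a - 1) := by
  have hb : √(1 - a ^ 2) ≠ 0 := (sqrt_pos.2 (by nlinarith)).ne'
  rw [nuPrimitive, mul_div_cancel_left₀ _ two_ne_zero, cos_arcsin, sin_arcsin (by linarith) ha1.le,
    div_self hb, mul_comm (√(1 - a ^ 2)) a, div_self (mul_ne_zero ha0.ne' hb), arcsin_one]
  ring

lemma integral_sqrt_one_sub_div_sin_sq {a : ℝ} (ha0 : 0 ≤ a) (ha1 : a < 1) :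
    ∫ θ in 2 * arcsin a..π, √(1 - a ^ 2 / sin (θ / 2) ^ 2) = π * (1 - a) := by
  rcases ha0.eq_or_lt with rfl | ha0
  · simp
  have hc : 2 * arcsin a ≤ π := by linarith [arcsin_le_pi_div_two a]
  have ha : a ∈ Icc (-1 : ℝ) 1 := ⟨by linarith, ha1.le⟩
  have hhalf : ∀ θ ∈ Icc (2 * arcsin a) π, θ / 2 ∈ Icc (-(π / 2)) (π / 2) := fun θ hθ =>
    ⟨by linarith [hθ.1, arcsin_pos.2 ha0], by linarith [hθ.2]⟩
  have hsin : ∀ θ ∈ Icc (2 * arcsin a) π, sin (θ / 2) ≠ 0 := fun θ hθ =>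
    (ha0.trans_le <| (arcsin_le_iff_le_sin ha (hhalf θ hθ)).1 (by linarith [hθ.1])).ne'
  rw [intervalIntegral.integral_eq_sub_of_hasDerivAt_of_le hc
    (continuousOn_nuPrimitive hsin (by nlinarith)) (fun θ hθ => hasDerivAt_nuPrimitive ?_)
    (integrableOn_sqrt_one_sub_div_sin_sq a measure_Icc_lt_top.ne).intervalIntegrable,
    nuPrimitive_pi, nuPrimitive_two_mul_arcsin ha0 ha1]
  · ring
  · rw [abs_of_pos ha0, ← arcsin_lt_iff_lt_sin ha (hhalf θ (Ioo_subset_Icc_self hθ))]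
    linarith [hθ.1]

theorem nu_infty_probability (κ : ℝ) (hκ : κ ∈ Set.Ioo (-1 : ℝ) 1) :
    (1 / (2 * π)) * ∫ θ in {θ : ℝ | θ ∈ Set.Icc (-π) π ∧ |κ| ≤ |Real.sin (θ / 2)|},
        Real.sqrt (1 - κ ^ 2 / Real.sin (θ / 2) ^ 2)
      = 1 - |κ| := by
  have ha : |κ| < 1 := abs_lt.2 hκ
  have hc : 0 ≤ 2 * arcsin |κ| := mul_nonneg zero_le_two (arcsin_nonneg.2 (abs_nonneg κ))
  have hcπ : 2 * arcsin |κ| ≤ π := by linarith [arcsin_le_pi_div_two |κ|]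
  rw [setOf_le_abs_sin_half_eq_union ⟨by linarith [abs_nonneg κ], ha.le⟩, ← sq_abs κ,
    setIntegral_union₀ (aedisjoint_Icc_neg_Icc hc _ _) nullMeasurableSet_Icc
      (integrableOn_sqrt_one_sub_div_sin_sq _ measure_Icc_lt_top.ne)
      (integrableOn_sqrt_one_sub_div_sin_sq _ measure_Icc_lt_top.ne),
    setIntegral_Icc_neg_of_even (fun θ => by simp [neg_div]) hcπ, integral_Icc_eq_integral_Ioc,
    ← intervalIntegral.integral_of_le hcπ, integral_sqrt_one_sub_div_sin_sq (abs_nonneg κ) ha]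
  field_simp
  ring
end

section
/- Let t > 2. There exists a unique d_t ∈ (√((t-2)/t), 1) such that ξ_t(d_t) = -1, where ξ_t(a) = e^{ta}(a-1)/(a+1); moreover ξ_t is strictly increasing on (d_t, ∞) restricted to where its derivative is positive, i.e., ξ_t'(a) > 0 for a > √((t-2)/t). -/
/-!
The numerator `t a² + 2 - t` of `ξ_t'` is positive exactly for `a > s := √((t-2)/t)`, so `ξ_t` is
strictly increasing on `[s, ∞)`. Since `ξ_t 1 = 0`, the root of `ξ_t = -1` in `(s, 1)` exists by the
intermediate value theorem once `ξ_t s < -1`. As `t = 2 / (1 - s²)`, that inequality reads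
`log ((1 + s) / (1 - s)) < 2 s / (1 - s²)`, i.e. `y < sinh y` for `y = log ((1 + s) / (1 - s))`.
-/

open Real Set

noncomputable def xi (t a : ℝ) : ℝ := (a - 1) / (a + 1) * exp (t * a)

lemma xi_one (t : ℝ) : xi t 1 = 0 := by simp [xi]

lemma hasDerivAt_xi (t : ℝ) {a : ℝ} (ha : a + 1 ≠ 0) :
    HasDerivAt (xi t) (exp (t * a) * (t * a ^ 2 + 2 - t) / (a + 1) ^ 2) a := by
  have hfrac : HasDerivAt (fun x : ℝ => (x - 1) / (x + 1)) (2 / (a + 1) ^ 2) a := by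
    refine (((hasDerivAt_id a).sub_const 1).div ((hasDerivAt_id a).add_const 1) ha).congr_deriv ?_
    simp only [id]
    field_simp
    ring
  have hexp : HasDerivAt (fun x : ℝ => exp (t * x)) (exp (t * a) * t) a := by
    simpa using ((hasDerivAt_id a).const_mul t).exp
  refine (hfrac.mul hexp).congr_deriv ?_
  field_simp
  ring

lemma continuousOn_xi (t : ℝ) : ContinuousOn (xi t) (Ioi (-1)) := fun a ha =>
  (hasDerivAt_xi t (by linarith [mem_Ioi.mp ha] : 0 < a + 1).ne').continuousAt.continuousWithinAt

lemma deriv_xi_pos {t a : ℝ} (ht : 0 < t) (ha : √((t - 2) / t) < a) :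
    0 < exp (t * a) * (t * a ^ 2 + 2 - t) / (a + 1) ^ 2 := by
  have ha0 : 0 < a := (sqrt_nonneg _).trans_lt ha
  have hnum : 0 < t * a ^ 2 + 2 - t := by
    have := lt_sq_of_sqrt_lt ha
    rw [div_lt_iff₀ ht] at this
    linarith
  positivity

lemma strictMonoOn_xi {t : ℝ} (ht : 0 < t) : StrictMonoOn (xi t) (Ici √((t - 2) / t)) := by
  have hs : Ici √((t - 2) / t) ⊆ Ioi (-1) :=
    Ici_subset_Ioi.mpr (by linarith [sqrt_nonneg ((t - 2) / t)])
  refine strictMonoOn_of_deriv_pos (convex_Ici _) ((continuousOn_xi t).mono hs) fun a ha => ?_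
  rw [interior_Ici] at ha
  have ha0 : 0 < a + 1 := by linarith [sqrt_nonneg ((t - 2) / t), mem_Ioi.mp ha]
  rw [(hasDerivAt_xi t ha0.ne').deriv]
  exact deriv_xi_pos ht ha

lemma one_add_div_one_sub_lt_exp {s : ℝ} (hs0 : 0 < s) (hs1 : s < 1) :
    (1 + s) / (1 - s) < exp (2 / (1 - s ^ 2) * s) := by
  have hx : 0 < (1 + s) / (1 - s) := div_pos (by linarith) (by linarith)
  have hy : 0 < log ((1 + s) / (1 - s)) :=
    log_pos ((one_lt_div (by linarith)).mpr (by linarith))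
  have hsinh : sinh (log ((1 + s) / (1 - s))) = 2 / (1 - s ^ 2) * s := by
    have : 1 - s ≠ 0 := by linarith
    have : 1 + s ≠ 0 := by linarith
    have : 1 - s ^ 2 ≠ 0 := by nlinarith
    rw [sinh_log hx]
    field_simp
    ring
  calc (1 + s) / (1 - s) = exp (log ((1 + s) / (1 - s))) := (exp_log hx).symm
    _ < exp (2 / (1 - s ^ 2) * s) := exp_lt_exp.mpr (hsinh ▸ self_lt_sinh_iff.mpr hy)

lemma sqrt_sub_two_div_lt_one {t : ℝ} (ht : 0 < t) : √((t - 2) / t) < 1 :=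
  (sqrt_lt' one_pos).mpr (by rw [one_pow, div_lt_one ht]; linarith)

lemma xi_sqrt_lt_neg_one {t : ℝ} (ht : 2 < t) : xi t √((t - 2) / t) < -1 := by
  set s := √((t - 2) / t)
  have hfrac : 0 < (t - 2) / t := div_pos (by linarith) (by linarith)
  have hs0 : 0 < s := sqrt_pos.mpr hfrac
  have hs1 : s < 1 := sqrt_sub_two_div_lt_one (by linarith)
  have ht_eq : 2 / (1 - s ^ 2) = t := by
    rw [sq_sqrt hfrac.le, show 1 - (t - 2) / t = 2 / t by field_simp; ring]
    field_simp
  have hkey := one_add_div_one_sub_lt_exp hs0 hs1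
  rw [ht_eq, div_lt_iff₀ (by linarith)] at hkey
  rw [xi, div_mul_eq_mul_div, div_lt_iff₀ (by linarith)]
  linarith

theorem xi_root_and_deriv_pos (t : ℝ) (ht : 2 < t) :
    (∃! d : ℝ, d ∈ Set.Ioo (Real.sqrt ((t - 2) / t)) 1 ∧
        (d - 1) / (d + 1) * Real.exp (t * d) = -1) ∧
    ∀ a : ℝ, Real.sqrt ((t - 2) / t) < a →
      0 < Real.exp (t * a) * (t * a ^ 2 + 2 - t) / (a + 1) ^ 2 := by
  have ht0 : 0 < t := by linarith
  set s := √((t - 2) / t)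
  have hs1 : s < 1 := sqrt_sub_two_div_lt_one ht0
  have hmono : StrictMonoOn (xi t) (Icc s 1) := (strictMonoOn_xi ht0).mono Icc_subset_Ici_self
  have hcont : ContinuousOn (xi t) (Icc s 1) :=
    (continuousOn_xi t).mono fun a ha => mem_Ioi.mpr (by linarith [sqrt_nonneg ((t - 2) / t), ha.1])
  obtain ⟨d, hd, hxid⟩ : (-1 : ℝ) ∈ xi t '' Ioo s 1 :=
    intermediate_value_Ioo hs1.le hcont ⟨xi_sqrt_lt_neg_one ht, by rw [xi_one]; norm_num⟩
  refine ⟨⟨d, ⟨hd, hxid⟩, fun e ⟨he, hxie⟩ => ?_⟩, fun a ha => deriv_xi_pos ht0 ha⟩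
  exact hmono.injOn (Ioo_subset_Icc_self he) (Ioo_subset_Icc_self hd) (hxie.trans hxid.symm)
end
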